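/- arXiv:2305.04604 — 4 statements merged into one kernel-verified Lean document; each statement's English description precedes it below -/
import Mathlib

section
/- If the divergence measure D(·‖·) is convex in its second argument, then the rate-distortion-perception function R(D,P) is jointly convex in (D,P): for λ ∈ [0,1], R(λD₁+(1-λ)D₂, λP₁+(1-λ)P₂) ≤ λR(D₁,P₁) + (1-λ)R(D₂,P₂). -/
/-!
`R(D, P)` is the infimum of the mutual information `I(p, Q)` over the channels `Q` meeting the
distortion and perception constraints. Expected distortion and output marginal are linear in `Q`
and the divergence is convex in the marginal, so mixing a channel feasible for `(D₁, P₁)` with one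
feasible for `(D₂, P₂)` yields a channel feasible for the mixed constraints. Mutual information is
convex in `Q` (the log-sum inequality, i.e. Jensen for `t ↦ t log t`) and nonnegative, hence the
infimum under the mixed constraints is at most the mix of the two infima.
-/

open Finset Real

theorem sum_mul_log_div_le {ι : Type*} (s : Finset ι) {a b : ι → ℝ}
    (ha : ∀ i ∈ s, 0 ≤ a i) (hb : ∀ i ∈ s, 0 ≤ b i) (hab : ∀ i ∈ s, b i = 0 → a i = 0) :
    (∑ i ∈ s, a i) * log ((∑ i ∈ s, a i) / ∑ i ∈ s, b i) ≤ ∑ i ∈ s, a i * log (a i / b i) := by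
  rcases (sum_nonneg hb).eq_or_lt with hB | hB
  · have hb0 : ∀ i ∈ s, b i = 0 := (sum_eq_zero_iff_of_nonneg hb).1 hB.symm
    simp +contextual [hb0]
  have hcancel : ∀ i ∈ s, b i * (a i / b i) = a i := by
    intro i hi
    rcases eq_or_ne (b i) 0 with h | h
    · simp [h, hab i hi h]
    · exact mul_div_cancel₀ _ h
  have hjensen := convexOn_mul_log.map_sum_le (t := s) (w := fun i => b i / ∑ j ∈ s, b j)
    (p := fun i => a i / b i) (fun i hi => div_nonneg (hb i hi) hB.le)
    (by rw [← sum_div, div_self hB.ne']) (fun i hi => div_nonneg (ha i hi) (hb i hi))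
  simp only [smul_eq_mul, ← mul_assoc, div_mul_eq_mul_div _ (∑ j ∈ s, b j), ← sum_div] at hjensen
  rw [sum_congr rfl hcancel,
    sum_congr rfl fun i hi => congrArg (· * log (a i / b i)) (hcancel i hi),
    div_le_div_iff_of_pos_right hB] at hjensen
  exact hjensen

theorem mul_log_div_mul_left (a b c : ℝ) : c * a * log (c * a / (c * b)) = c * a * log (a / b) := by
  rcases eq_or_ne c 0 with rfl | hc
  · simp
  · rw [mul_div_mul_left _ _ hc]

theorem convex_comb_mul_log_div_le {a₁ a₂ b₁ b₂ s t : ℝ} (ha₁ : 0 ≤ a₁) (ha₂ : 0 ≤ a₂)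
    (hb₁ : 0 ≤ b₁) (hb₂ : 0 ≤ b₂) (hab₁ : b₁ = 0 → a₁ = 0) (hab₂ : b₂ = 0 → a₂ = 0)
    (hs : 0 ≤ s) (ht : 0 ≤ t) :
    (s * a₁ + t * a₂) * log ((s * a₁ + t * a₂) / (s * b₁ + t * b₂)) ≤
      s * (a₁ * log (a₁ / b₁)) + t * (a₂ * log (a₂ / b₂)) := by
  have key := sum_mul_log_div_le univ (a := ![s * a₁, t * a₂]) (b := ![s * b₁, t * b₂])
    (fun i _ => by fin_cases i <;> simp <;> positivity)
    (fun i _ => by fin_cases i <;> simp <;> positivity)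
    (fun i _ => by fin_cases i <;> simp <;> grind)
  simp only [Fin.sum_univ_two, Matrix.cons_val_zero, Matrix.cons_val_one,
    mul_log_div_mul_left] at key
  simpa only [mul_assoc] using key

theorem le_mul_csInf_add_mul_csInf {A B : Set ℝ} {c s t : ℝ} (hA : A.Nonempty) (hA' : BddBelow A)
    (hB : B.Nonempty) (hB' : BddBelow B) (hs : 0 ≤ s) (ht : 0 ≤ t)
    (h : ∀ u ∈ A, ∀ v ∈ B, c ≤ s * u + t * v) : c ≤ s * sInf A + t * sInf B := by
  rw [← smul_eq_mul, ← smul_eq_mul, ← Real.sInf_smul_of_nonneg hs, ← Real.sInf_smul_of_nonneg ht,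
    ← csInf_add (hA.smul_set) (hA'.smul_of_nonneg hs) (hB.smul_set) (hB'.smul_of_nonneg ht)]
  refine le_csInf (hA.smul_set.add hB.smul_set) ?_
  rintro _ ⟨_, ⟨u, hu, rfl⟩, _, ⟨v, hv, rfl⟩, rfl⟩
  exact h u hu v hv

theorem ConvexOn.csInf_image_le {E : Type*} [AddCommMonoid E] [Module ℝ E] {C S S₁ S₂ : Set E}
    {f : E → ℝ} (hf : ConvexOn ℝ C f) (hbdd : BddBelow (f '' C)) (hS : S ⊆ C) (hS₁ : S₁ ⊆ C)
    (hS₂ : S₂ ⊆ C) (hne₁ : S₁.Nonempty) (hne₂ : S₂.Nonempty) {s t : ℝ} (hs : 0 ≤ s) (ht : 0 ≤ t)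
    (hst : s + t = 1) (hmem : ∀ x₁ ∈ S₁, ∀ x₂ ∈ S₂, s • x₁ + t • x₂ ∈ S) :
    sInf (f '' S) ≤ s * sInf (f '' S₁) + t * sInf (f '' S₂) := by
  refine le_mul_csInf_add_mul_csInf (hne₁.image f) (hbdd.mono (Set.image_mono hS₁))
    (hne₂.image f) (hbdd.mono (Set.image_mono hS₂)) hs ht ?_
  rintro _ ⟨x₁, hx₁, rfl⟩ _ ⟨x₂, hx₂, rfl⟩
  calc sInf (f '' S) ≤ f (s • x₁ + t • x₂) :=
        csInf_le (hbdd.mono (Set.image_mono hS)) ⟨_, hmem x₁ hx₁ x₂ hx₂, rfl⟩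
    _ ≤ s * f x₁ + t * f x₂ := hf.2 (hS₁ hx₁) (hS₂ hx₂) hs ht hst

section Channel

variable {X Y : Type*} [Fintype X]

noncomputable def outputMarginal (p : X → ℝ) (Q : X → Y → ℝ) (y : Y) : ℝ := ∑ x, p x * Q x y

noncomputable def mutualInformation [Fintype Y] (p : X → ℝ) (Q : X → Y → ℝ) : ℝ :=
  ∑ x, ∑ y, p x * Q x y * log (Q x y / outputMarginal p Q y)

theorem outputMarginal_smul_add_smul (p : X → ℝ) (Q₁ Q₂ : X → Y → ℝ) (s t : ℝ) :
    outputMarginal p (s • Q₁ + t • Q₂) = s • outputMarginal p Q₁ + t • outputMarginal p Q₂ := by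
  ext y
  simp only [outputMarginal, Pi.add_apply, Pi.smul_apply, smul_eq_mul, mul_sum, ← sum_add_distrib]
  exact sum_congr rfl fun x _ => by ring

variable {p : X → ℝ} {Q : X → Y → ℝ}

theorem outputMarginal_nonneg (hp : ∀ x, 0 ≤ p x) (hQ : ∀ x y, 0 ≤ Q x y) (y : Y) :
    0 ≤ outputMarginal p Q y :=
  sum_nonneg fun x _ => mul_nonneg (hp x) (hQ x y)

theorem mul_eq_zero_of_mul_outputMarginal_eq_zero (hp : ∀ x, 0 ≤ p x) (hQ : ∀ x y, 0 ≤ Q x y)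
    {x : X} {y : Y} (h : p x * outputMarginal p Q y = 0) : p x * Q x y = 0 := by
  rcases mul_eq_zero.1 h with h | h
  · simp [h]
  · have := single_le_sum (f := fun x => p x * Q x y) (fun x _ => mul_nonneg (hp x) (hQ x y))
      (mem_univ x)
    exact le_antisymm (h ▸ this) (mul_nonneg (hp x) (hQ x y))

theorem mutualInformation_nonneg [Fintype Y] (hp : ∀ x, 0 ≤ p x) (hps : ∑ x, p x = 1)
    (hQ : ∀ x y, 0 ≤ Q x y) : 0 ≤ mutualInformation p Q := by
  have hmass : ∑ xy : X × Y, p xy.1 * outputMarginal p Q xy.2 =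
      ∑ xy : X × Y, p xy.1 * Q xy.1 xy.2 := by
    rw [Fintype.sum_prod_type, Fintype.sum_prod_type, sum_comm]
    simp only [← sum_mul, hps, one_mul, outputMarginal]
    exact sum_comm
  have key := sum_mul_log_div_le univ (a := fun xy : X × Y => p xy.1 * Q xy.1 xy.2)
    (b := fun xy : X × Y => p xy.1 * outputMarginal p Q xy.2)
    (fun xy _ => mul_nonneg (hp _) (hQ _ _))
    (fun xy _ => mul_nonneg (hp _) (outputMarginal_nonneg hp hQ _))
    (fun xy _ => mul_eq_zero_of_mul_outputMarginal_eq_zero hp hQ)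
  have hlhs : ∀ S : ℝ, S * log (S / S) = 0 := fun S => by
    rcases eq_or_ne S 0 with rfl | hS <;> simp [*]
  rw [hmass, hlhs, Fintype.sum_prod_type] at key
  simp only [mul_log_div_mul_left] at key
  exact key

theorem convexOn_mutualInformation [Fintype Y] (hp : ∀ x, 0 ≤ p x) :
    ConvexOn ℝ (Set.Ici (0 : X → Y → ℝ)) (mutualInformation p) := by
  refine ⟨convex_Ici 0, fun Q₁ hQ₁ Q₂ hQ₂ s t hs ht _ => ?_⟩
  simp only [mutualInformation, outputMarginal_smul_add_smul, smul_eq_mul, mul_sum,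
    ← sum_add_distrib]
  refine sum_le_sum fun x _ => sum_le_sum fun y _ => ?_
  have key := convex_comb_mul_log_div_le (mul_nonneg (hp x) (hQ₁ x y))
    (mul_nonneg (hp x) (hQ₂ x y)) (mul_nonneg (hp x) (outputMarginal_nonneg hp hQ₁ y))
    (mul_nonneg (hp x) (outputMarginal_nonneg hp hQ₂ y))
    (mul_eq_zero_of_mul_outputMarginal_eq_zero hp hQ₁)
    (mul_eq_zero_of_mul_outputMarginal_eq_zero hp hQ₂) hs ht
  simp only [mul_left_comm s (p x), mul_left_comm t (p x), ← mul_add, mul_log_div_mul_left] at key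
  simpa only [Pi.add_apply, Pi.smul_apply, smul_eq_mul, mul_assoc] using key


noncomputable def feasibleChannels [Fintype Y] (p : X → ℝ) (d : X → Y → ℝ)
    (Div : (X → ℝ) → (Y → ℝ) → ℝ) (D P : ℝ) : Set (X → Y → ℝ) :=
  {Q | (∀ x y, 0 ≤ Q x y) ∧ (∀ x, ∑ y, Q x y = 1) ∧ ∑ x, ∑ y, p x * Q x y * d x y ≤ D ∧
    Div p (outputMarginal p Q) ≤ P}

theorem smul_add_smul_mem_feasibleChannels [Fintype Y] {d : X → Y → ℝ}
    {Div : (X → ℝ) → (Y → ℝ) → ℝ} (hDiv : ConvexOn ℝ Set.univ (Div p)) {Q₁ Q₂ : X → Y → ℝ}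
    {D₁ D₂ P₁ P₂ s t : ℝ} (h₁ : Q₁ ∈ feasibleChannels p d Div D₁ P₁)
    (h₂ : Q₂ ∈ feasibleChannels p d Div D₂ P₂) (hs : 0 ≤ s) (ht : 0 ≤ t) (hst : s + t = 1) :
    s • Q₁ + t • Q₂ ∈ feasibleChannels p d Div (s * D₁ + t * D₂) (s * P₁ + t * P₂) := by
  obtain ⟨hQ₁, hrow₁, hdist₁, hperc₁⟩ := h₁
  obtain ⟨hQ₂, hrow₂, hdist₂, hperc₂⟩ := h₂
  refine ⟨fun x y => add_nonneg (mul_nonneg hs (hQ₁ x y)) (mul_nonneg ht (hQ₂ x y)),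
    fun x => ?_, ?_, ?_⟩
  · simp [sum_add_distrib, ← mul_sum, hrow₁, hrow₂, hst]
  · have hlin : ∑ x, ∑ y, p x * (s • Q₁ + t • Q₂) x y * d x y =
        s * ∑ x, ∑ y, p x * Q₁ x y * d x y + t * ∑ x, ∑ y, p x * Q₂ x y * d x y := by
      simp only [Pi.add_apply, Pi.smul_apply, smul_eq_mul, mul_sum, ← sum_add_distrib]
      exact sum_congr rfl fun x _ => sum_congr rfl fun y _ => by ring
    rw [hlin]
    gcongr
  · rw [outputMarginal_smul_add_smul]
    exact (hDiv.2 trivial trivial hs ht hst).trans (by simp only [smul_eq_mul]; gcongr)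

end Channel

theorem rdpf_jointly_convex_general {X : Type*} [Fintype X]
    (p : X → ℝ) (hp : ∀ x, 0 ≤ p x) (hps : ∑ x, p x = 1)
    (d : X → X → ℝ)
    (Div : (X → ℝ) → (X → ℝ) → ℝ)
    (hDivConv : ∀ a, ConvexOn ℝ Set.univ (fun q => Div a q))
    (R : ℝ → ℝ → ℝ)
    (hR : ∀ D P, R D P = sInf { r : ℝ | ∃ Q : X → X → ℝ,
        (∀ x y, 0 ≤ Q x y) ∧ (∀ x, ∑ y, Q x y = 1) ∧
        (∑ x, ∑ y, p x * Q x y * d x y) ≤ D ∧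
        Div p (fun y => ∑ x, p x * Q x y) ≤ P ∧
        r = ∑ x, ∑ y, p x * Q x y *
              Real.log (Q x y / (∑ x', p x' * Q x' y)) })
    (D₁ D₂ P₁ P₂ : ℝ)
    (hfeas₁ : ∃ Q : X → X → ℝ,
        (∀ x y, 0 ≤ Q x y) ∧ (∀ x, ∑ y, Q x y = 1) ∧
        (∑ x, ∑ y, p x * Q x y * d x y) ≤ D₁ ∧
        Div p (fun y => ∑ x, p x * Q x y) ≤ P₁)
    (hfeas₂ : ∃ Q : X → X → ℝ,
        (∀ x y, 0 ≤ Q x y) ∧ (∀ x, ∑ y, Q x y = 1) ∧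
        (∑ x, ∑ y, p x * Q x y * d x y) ≤ D₂ ∧
        Div p (fun y => ∑ x, p x * Q x y) ≤ P₂)
    (lam : ℝ) (hlam0 : 0 ≤ lam) (hlam1 : lam ≤ 1) :
    R (lam * D₁ + (1 - lam) * D₂) (lam * P₁ + (1 - lam) * P₂)
      ≤ lam * R D₁ P₁ + (1 - lam) * R D₂ P₂ := by
  have hR' : ∀ D P, R D P = sInf (mutualInformation p '' feasibleChannels p d Div D P) := by
    intro D P
    rw [hR]
    congr 1
    ext r
    simp only [Set.mem_ofPred_eq, Set.mem_image, feasibleChannels, and_assoc, eq_comm]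
    rfl
  rw [hR', hR', hR']
  refine (convexOn_mutualInformation hp).csInf_image_le ?_ (fun Q hQ => hQ.1)
    (fun Q hQ => hQ.1) (fun Q hQ => hQ.1) hfeas₁ hfeas₂ hlam0 (sub_nonneg.2 hlam1) (by ring)
    fun Q₁ h₁ Q₂ h₂ => smul_add_smul_mem_feasibleChannels (hDivConv p) h₁ h₂ hlam0
      (sub_nonneg.2 hlam1) (by ring)
  exact ⟨0, by rintro _ ⟨Q, hQ, rfl⟩; exact mutualInformation_nonneg hp hps hQ⟩

/-- If the divergence `Div` is convex in its second argument, the RDPF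
`R(D,P)` is jointly convex in `(D,P)`. -/
theorem rdpf_jointly_convex {X : Type*} [Fintype X]
    (p : X → ℝ) (hp : ∀ x, 0 ≤ p x) (hps : ∑ x, p x = 1)
    (d : X → X → ℝ) (hd : ∀ x y, 0 ≤ d x y)
    (Div : (X → ℝ) → (X → ℝ) → ℝ)
    (hDiv0 : ∀ a b, 0 ≤ Div a b)
    (hDivConv : ∀ a, ConvexOn ℝ Set.univ (fun q => Div a q))
    (R : ℝ → ℝ → ℝ)
    (hR : ∀ D P, R D P = sInf { r : ℝ | ∃ Q : X → X → ℝ,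
        (∀ x y, 0 ≤ Q x y) ∧ (∀ x, ∑ y, Q x y = 1) ∧
        (∑ x, ∑ y, p x * Q x y * d x y) ≤ D ∧
        Div p (fun y => ∑ x, p x * Q x y) ≤ P ∧
        r = ∑ x, ∑ y, p x * Q x y *
              Real.log (Q x y / (∑ x', p x' * Q x' y)) })
    (D₁ D₂ P₁ P₂ : ℝ)
    (hfeas₁ : ∃ Q : X → X → ℝ,
        (∀ x y, 0 ≤ Q x y) ∧ (∀ x, ∑ y, Q x y = 1) ∧
        (∑ x, ∑ y, p x * Q x y * d x y) ≤ D₁ ∧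
        Div p (fun y => ∑ x, p x * Q x y) ≤ P₁)
    (hfeas₂ : ∃ Q : X → X → ℝ,
        (∀ x y, 0 ≤ Q x y) ∧ (∀ x, ∑ y, Q x y = 1) ∧
        (∑ x, ∑ y, p x * Q x y * d x y) ≤ D₂ ∧
        Div p (fun y => ∑ x, p x * Q x y) ≤ P₂)
    (lam : ℝ) (hlam0 : 0 ≤ lam) (hlam1 : lam ≤ 1) :
    R (lam * D₁ + (1 - lam) * D₂) (lam * P₁ + (1 - lam) * P₂)
      ≤ lam * R D₁ P₁ + (1 - lam) * R D₂ P₂ :=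
  rdpf_jointly_convex_general p hp hps d Div hDivConv R hR D₁ D₂ P₁ P₂ hfeas₁ hfeas₂ lam hlam0 hlam1
end

section
/- For fixed strictly positive probability vector q on X̂ and fixed positive weights A(x,x̂), the function Q ↦ Σ_{x,x̂} p(x)Q(x̂|x)[log(Q(x̂|x)/q(x̂)) − log A(x,x̂)] over stochastic matrices Q is minimized by Q*(x̂|x) = q(x̂)A(x,x̂)/Σ_i q(i)A(x,i), and the minimum value equals −Σ_x p(x) log(Σ_{x̂} q(x̂)A(x,x̂)). -/
/-!
Writing `w x̂ = q x̂ * A x x̂`, the objective of row `x` is `∑ r log (r / w)` for the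
row `r = Q(·|x)`. Against the normalized weights `c = w / ∑ w` this equals
`∑ r log (r / c) - log ∑ w`, and the first sum is a relative entropy, hence
nonnegative by `a - c ≤ a log (a / c)`; it vanishes at `r = c`.
-/

open Finset Real

lemma sub_le_mul_log_div {a c : ℝ} (ha : 0 ≤ a) (hc : 0 < c) : a - c ≤ a * log (a / c) := by
  have h := self_sub_one_le_mul_log (div_nonneg ha hc.le)
  calc a - c = c * (a / c - 1) := by field_simp
    _ ≤ c * (a / c * log (a / c)) := mul_le_mul_of_nonneg_left h hc.le
    _ = a * log (a / c) := by field_simp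

lemma sum_sub_sum_le_sum_mul_log_div {ι : Type*} (s : Finset ι) {a c : ι → ℝ}
    (ha : ∀ i ∈ s, 0 ≤ a i) (hc : ∀ i ∈ s, 0 < c i) :
    ∑ i ∈ s, a i - ∑ i ∈ s, c i ≤ ∑ i ∈ s, a i * log (a i / c i) := by
  rw [← sum_sub_distrib]
  exact sum_le_sum fun i hi => sub_le_mul_log_div (ha i hi) (hc i hi)

lemma mul_log_div_div {a b t : ℝ} (hb : b ≠ 0) (ht : t ≠ 0) :
    a * log (a / (b / t)) = a * log (a / b) + a * log t := by
  rcases eq_or_ne a 0 with rfl | ha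
  · simp
  · rw [div_div_eq_mul_div, mul_div_right_comm, log_mul (div_ne_zero ha hb) ht, mul_add]

lemma mul_log_div_sub_log {a b c : ℝ} (hb : b ≠ 0) (hc : c ≠ 0) :
    a * (log (a / b) - log c) = a * log (a / (b * c)) := by
  rcases eq_or_ne a 0 with rfl | ha
  · simp
  · rw [← div_div, log_div (div_ne_zero ha hb) hc]

lemma neg_log_sum_le_sum_mul_log_div {ι : Type*} [Fintype ι] {r w : ι → ℝ}
    (hr : ∀ i, 0 ≤ r i) (hrs : ∑ i, r i = 1) (hw : ∀ i, 0 < w i) :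
    -log (∑ i, w i) ≤ ∑ i, r i * log (r i / w i) := by
  have : Nonempty ι := by
    by_contra h
    simp [not_nonempty_iff.mp h] at hrs
  set Z := ∑ i, w i
  have hZ : 0 < Z := sum_pos (fun i _ => hw i) univ_nonempty
  have hcs : ∑ i, w i / Z = 1 := by rw [← sum_div, div_self hZ.ne']
  have gibbs := sum_sub_sum_le_sum_mul_log_div univ (a := r) (c := fun i => w i / Z)
    (fun i _ => hr i) (fun i _ => div_pos (hw i) hZ)
  simp only [hrs, hcs, sub_self, mul_log_div_div (hw _).ne' hZ.ne', sum_add_distrib,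
    ← sum_mul, one_mul] at gibbs
  linarith

lemma sum_normalized_mul_log_div {ι : Type*} [Fintype ι] {w : ι → ℝ}
    (hw : ∀ i, w i ≠ 0) :
    ∑ i, w i / (∑ j, w j) * log (w i / (∑ j, w j) / w i) = -log (∑ j, w j) := by
  set Z := ∑ j, w j
  have hterm : ∀ i, w i / Z * log (w i / Z / w i) = -log Z * (w i / Z) := fun i => by
    rw [div_div_cancel_left' (hw i), log_inv]
    ring
  simp only [hterm, ← mul_sum, ← sum_div]
  rcases eq_or_ne Z 0 with hZ | hZ
  · simp [hZ]
  · rw [div_self hZ, mul_one]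

theorem q_step_minimizer_general {X Y : Type*} [Fintype X] [Fintype Y]
    (p : X → ℝ) (hp : ∀ x, 0 ≤ p x)
    (q : Y → ℝ) (hq : ∀ y, 0 < q y)
    (A : X → Y → ℝ) (hA : ∀ x y, 0 < A x y) :
    (∀ Q : X → Y → ℝ, (∀ x y, 0 ≤ Q x y) → (∀ x, ∑ y, Q x y = 1) →
      (∑ x, ∑ y, p x * Q x y * (Real.log (Q x y / q y) - Real.log (A x y)))
        ≥ - ∑ x, p x * Real.log (∑ y, q y * A x y)) ∧
    (∑ x, ∑ y, p x * (q y * A x y / ∑ i, q i * A x i) *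
        (Real.log ((q y * A x y / ∑ i, q i * A x i) / q y) - Real.log (A x y)))
      = - ∑ x, p x * Real.log (∑ y, q y * A x y) := by
  have hqA : ∀ x y, 0 < q y * A x y := fun x y => mul_pos (hq y) (hA x y)
  simp only [mul_assoc (p _), mul_log_div_sub_log (hq _).ne' (hA _ _).ne', ← mul_sum,
    ← sum_neg_distrib]
  constructor
  · intro Q hQ hQs
    refine sum_le_sum fun x _ => ?_
    rw [← mul_neg]
    exact mul_le_mul_of_nonneg_left
      (neg_log_sum_le_sum_mul_log_div (hQ x) (hQs x) (hqA x)) (hp x)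
  · refine sum_congr rfl fun x _ => ?_
    rw [sum_normalized_mul_log_div fun y => (hqA x y).ne', mul_neg]

/-- The Q-step of the alternating minimization: for fixed strictly positive
`q` and positive weights `A`, the objective
`Q ↦ ∑_{x,x̂} p x * Q x x̂ * (log (Q x x̂ / q x̂) - log (A x x̂))` over
stochastic matrices is minimized by
`Q* x x̂ = q x̂ * A x x̂ / ∑ i, q i * A x i`, with minimum value
`-∑ x, p x * log (∑ x̂, q x̂ * A x x̂)`. -/
theorem q_step_minimizer {X Y : Type*} [Fintype X] [Fintype Y]
    (p : X → ℝ) (hp : ∀ x, 0 ≤ p x) (hps : ∑ x, p x = 1)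
    (q : Y → ℝ) (hq : ∀ y, 0 < q y) (hqs : ∑ y, q y = 1)
    (A : X → Y → ℝ) (hA : ∀ x y, 0 < A x y) :
    (∀ Q : X → Y → ℝ, (∀ x y, 0 ≤ Q x y) → (∀ x, ∑ y, Q x y = 1) →
      (∑ x, ∑ y, p x * Q x y * (Real.log (Q x y / q y) - Real.log (A x y)))
        ≥ - ∑ x, p x * Real.log (∑ y, q y * A x y)) ∧
    (∑ x, ∑ y, p x * (q y * A x y / ∑ i, q i * A x i) *
        (Real.log ((q y * A x y / ∑ i, q i * A x i) / q y) - Real.log (A x y)))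
      = - ∑ x, p x * Real.log (∑ y, q y * A x y) :=
  q_step_minimizer_general p hp q hq A hA
end

section
/- (Lemma 6: eigenvalues of M are positive under full-rank distortion kernel) Let M be the |X̂|×|X̂| matrix with entries M(i,j) = q*(i) Σ_x p(x) A(x,i)A(x,j)/(Σ_k q*(k)A(x,k))², where p and q* are strictly positive probability vectors and A(x,x̂) = e^{−s₁d(x,x̂)}·e^{−s₂g(x̂)} with the matrix [e^{−s₁d(x,x̂)}] full rank. Then all eigenvalues of M are real and strictly positive. -/
/-!
Over `ℂ`, `M = Q * (Aᴴ * W * A)` with `Q = diagonal q*` and `W = diagonal (p / (∑ₖ q*ₖ A(·,k))²)`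
positive diagonal matrices, and `Aᴴ * W * A` is positive definite because `A`, a column scaling of
the invertible kernel `exp (-s₁ d)` by `exp (-s₂ g)`, is invertible. If `Q * P v = μ v` with
`P, Q` positive definite, then `v* P v = μ · v* Q⁻¹ v` with both forms positive, so `μ > 0`.
-/

open Finset Matrix
open scoped ComplexOrder

namespace Matrix.PosDef

variable {n 𝕜 : Type*} [Fintype n] [RCLike 𝕜] {P Q : Matrix n n 𝕜} {μ : 𝕜} {v : n → 𝕜}

theorem pos_of_mulVec_eq_smul_mulVec (hP : P.PosDef) (hQ : Q.PosDef) (hv : v ≠ 0)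
    (h : P *ᵥ v = μ • (Q *ᵥ v)) : 0 < μ := by
  have hform : star v ⬝ᵥ P *ᵥ v = μ * (star v ⬝ᵥ Q *ᵥ v) := by
    rw [h, dotProduct_smul, smul_eq_mul]
  have hQv := hQ.dotProduct_mulVec_pos hv
  rw [← div_eq_iff hQv.ne'] at hform
  exact hform ▸ div_pos (hP.dotProduct_mulVec_pos hv) hQv

theorem pos_of_mul_mulVec_eq_smul [DecidableEq n] (hQ : Q.PosDef) (hP : P.PosDef) (hv : v ≠ 0)
    (h : (Q * P) *ᵥ v = μ • v) : 0 < μ := by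
  refine hP.pos_of_mulVec_eq_smul_mulVec hQ.inv hv ?_
  rw [← mulVec_smul, ← h, mulVec_mulVec, ← Matrix.mul_assoc,
    nonsing_inv_mul _ ((isUnit_iff_isUnit_det Q).mp hQ.isUnit), Matrix.one_mul]

end Matrix.PosDef

theorem Matrix.mulVec_injective_map_ofReal {n : Type*} [Fintype n] [DecidableEq n]
    {A : Matrix n n ℝ} (hA : A.det ≠ 0) : Function.Injective (A.map ((↑) : ℝ → ℂ)).mulVec := by
  rw [mulVec_injective_iff_isUnit, isUnit_iff_isUnit_det, isUnit_iff_ne_zero]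
  change (Complex.ofRealHom.mapMatrix A).det ≠ 0
  rw [← RingHom.map_det, Complex.ofRealHom_eq_coe]
  exact_mod_cast hA

noncomputable def normalizedWeight {X Y : Type*} [Fintype Y] (p : X → ℝ) (qs : Y → ℝ)
    (A : X → Y → ℝ) (x : X) : ℝ :=
  p x / (∑ k, qs k * A x k) ^ 2

theorem normalizedWeight_pos {X Y : Type*} [Fintype Y] [Nonempty Y] {p : X → ℝ} {qs : Y → ℝ}
    {A : X → Y → ℝ} (hp : ∀ x, 0 < p x) (hqs : ∀ y, 0 < qs y) (hA : ∀ x y, 0 < A x y) (x : X) :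
    0 < normalizedWeight p qs A x :=
  div_pos (hp x) (pow_pos (sum_pos (fun k _ => mul_pos (hqs k) (hA x k)) univ_nonempty) 2)

theorem map_ofReal_eq_diagonal_mul_conjTranspose_mul_mul {X Y : Type*} [Fintype X] [Fintype Y]
    [DecidableEq X] [DecidableEq Y] {p : X → ℝ} {qs : Y → ℝ} {A : X → Y → ℝ} {M : Matrix Y Y ℝ}
    (hM : ∀ i j, M i j = qs i * ∑ x, p x * A x i * A x j / (∑ k, qs k * A x k) ^ 2) :
    M.map ((↑) : ℝ → ℂ) = diagonal (fun i => (qs i : ℂ)) *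
      (((of A).map ((↑) : ℝ → ℂ))ᴴ * diagonal (fun x => (normalizedWeight p qs A x : ℂ)) *
        (of A).map ((↑) : ℝ → ℂ)) := by
  ext i j
  rw [map_apply, hM, diagonal_mul, mul_apply]
  simp only [mul_diagonal, conjTranspose_apply, map_apply, of_apply, Complex.star_def,
    Complex.conj_ofReal, normalizedWeight]
  push_cast
  congr 1
  exact sum_congr rfl fun x _ => by ring

theorem det_of_ne_zero_of_scale_columns {X : Type*} [Fintype X] [DecidableEq X] {A K : X → X → ℝ}
    {c : X → ℝ} (hK : (of K).det ≠ 0) (hc : ∀ y, c y ≠ 0) (hA : ∀ x y, A x y = c y * K x y) :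
    (of A).det ≠ 0 := by
  rw [show of A = of fun x y => c y * of K x y from funext₂ hA, det_mul_row]
  exact mul_ne_zero (prod_ne_zero_iff.mpr fun y _ => hc y) hK

theorem eigenvalues_of_M_positive_general {X : Type*} [Fintype X] [DecidableEq X]
    (p : X → ℝ) (hp : ∀ x, 0 < p x)
    (qs : X → ℝ) (hqs : ∀ x, 0 < qs x)
    (s₁ s₂ : ℝ)
    (d : X → X → ℝ) (g : X → ℝ)
    (hfull : (Matrix.of fun x y => Real.exp (-s₁ * d x y)).det ≠ 0)
    (A : X → X → ℝ) (hA : ∀ x y, A x y = Real.exp (-s₁ * d x y - s₂ * g y))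
    (M : Matrix X X ℝ)
    (hM : ∀ i j, M i j =
      qs i * ∑ x, p x * A x i * A x j / (∑ k, qs k * A x k) ^ 2) :
    ∀ (μ : ℂ) (v : X → ℂ), v ≠ 0 →
      (M.map (fun r => (r : ℂ))).mulVec v = μ • v → μ.im = 0 ∧ 0 < μ.re := by
  intro μ v hv hMv
  have : Nonempty X := ⟨(Function.ne_iff.mp hv).choose⟩
  have hApos : ∀ x y, 0 < A x y := fun x y => hA x y ▸ Real.exp_pos _
  have hdetA : (of A).det ≠ 0 :=
    det_of_ne_zero_of_scale_columns hfull (fun _ => (Real.exp_pos _).ne') fun x y => by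
      rw [hA, sub_eq_add_neg, Real.exp_add, mul_comm]
  have hQ : (diagonal fun i => (qs i : ℂ)).PosDef :=
    PosDef.diagonal fun i => Complex.zero_lt_real.mpr (hqs i)
  have hW : (diagonal fun x => (normalizedWeight p qs A x : ℂ)).PosDef :=
    PosDef.diagonal fun x => Complex.zero_lt_real.mpr (normalizedWeight_pos hp hqs hApos x)
  rw [map_ofReal_eq_diagonal_mul_conjTranspose_mul_mul hM] at hMv
  have hμ : 0 < μ := hQ.pos_of_mul_mulVec_eq_smul
    (hW.conjTranspose_mul_mul_same (mulVec_injective_map_ofReal hdetA)) hv hMv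
  exact ⟨(Complex.pos_iff.mp hμ).2.symm, (Complex.pos_iff.mp hμ).1⟩

/-- Lemma 6: if the kernel `[exp (-s₁ d x x̂)]` is invertible, then all
eigenvalues of `M i j = q* i * ∑ x, p x * A x i * A x j / (∑ k, q* k * A x k)^2`
(with `A x x̂ = exp (-s₁ d x x̂ - s₂ g x̂)`) are real and strictly positive. -/
theorem eigenvalues_of_M_positive {X : Type*} [Fintype X] [DecidableEq X]
    (p : X → ℝ) (hp : ∀ x, 0 < p x) (hps : ∑ x, p x = 1)
    (qs : X → ℝ) (hqs : ∀ x, 0 < qs x) (hqss : ∑ x, qs x = 1)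
    (s₁ s₂ : ℝ) (hs₁ : 0 ≤ s₁) (hs₂ : 0 ≤ s₂)
    (d : X → X → ℝ) (hd : ∀ x y, 0 ≤ d x y) (g : X → ℝ)
    (hfull : (Matrix.of fun x y => Real.exp (-s₁ * d x y)).det ≠ 0)
    (A : X → X → ℝ) (hA : ∀ x y, A x y = Real.exp (-s₁ * d x y - s₂ * g y))
    (M : Matrix X X ℝ)
    (hM : ∀ i j, M i j =
      qs i * ∑ x, p x * A x i * A x j / (∑ k, qs k * A x k) ^ 2) :
    ∀ (μ : ℂ) (v : X → ℂ), v ≠ 0 →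
      (M.map (fun r => (r : ℂ))).mulVec v = μ • v → μ.im = 0 ∧ 0 < μ.re :=
  eigenvalues_of_M_positive_general p hp qs hqs s₁ s₂ d g hfull A hA M hM
end

section
/- (Lemma 7: eigenvalues of M are at most 1 at a fixed point) Let M(i,j) = q*(i) Σ_x p(x)A(x,i)A(x,j)/(Σ_k q*(k)A(x,k))², where q* is a fixed point of the BA update, i.e., Σ_x p(x)A(x,x̂)/Σ_k q*(k)A(x,k) = 1 for every x̂ in the support of q*, with q* strictly positive. Then every eigenvalue λ of M satisfies λ ≤ 1. -/
/-!
Swapping the two sums shows that the `j`-th column of `M` sums to `c(j)`, which is `1` at a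
fixed point; since `M` is entrywise nonnegative it is column-stochastic. A nonnegative
column-stochastic matrix does not increase the `ℓ¹` norm, so every real eigenvalue has
absolute value at most `1`.
-/

open Finset

namespace Matrix

variable {R n : Type*} [Fintype n] [DecidableEq n]
  [CommRing R] [LinearOrder R] [IsStrictOrderedRing R] {M : Matrix n n R}

theorem sum_abs_mulVec_le_of_mem_colStochastic (hM : M ∈ colStochastic R n) (v : n → R) :
    ∑ i, |(M *ᵥ v) i| ≤ ∑ i, |v i| := by
  have hpointwise : ∀ i, |(M *ᵥ v) i| ≤ (M *ᵥ fun j => |v j|) i := fun i => by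
    refine (abs_sum_le_sum_abs _ _).trans_eq (sum_congr rfl fun j _ => ?_)
    rw [abs_mul, abs_of_nonneg (nonneg_of_mem_colStochastic hM)]
  calc ∑ i, |(M *ᵥ v) i| ≤ ∑ i, (M *ᵥ fun j => |v j|) i :=
        sum_le_sum fun i _ => hpointwise i
    _ = ∑ i, |v i| := sum_mulVec_of_mem_colStochastic hM

theorem abs_le_one_of_mulVec_eq_smul_of_mem_colStochastic (hM : M ∈ colStochastic R n)
    {μ : R} {v : n → R} (hv : v ≠ 0) (hμ : M *ᵥ v = μ • v) : |μ| ≤ 1 := by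
  obtain ⟨i₀, hi₀⟩ := Function.ne_iff.mp hv
  have hpos : 0 < ∑ i, |v i| :=
    sum_pos' (fun i _ => abs_nonneg _) ⟨i₀, mem_univ _, abs_pos.2 hi₀⟩
  refine le_of_mul_le_mul_right ?_ hpos
  calc |μ| * ∑ i, |v i| = ∑ i, |(M *ᵥ v) i| := by simp [hμ, mul_sum, abs_mul]
    _ ≤ ∑ i, |v i| := sum_abs_mulVec_le_of_mem_colStochastic hM v
    _ = 1 * ∑ i, |v i| := (one_mul _).symm

end Matrix

section BlahutArimoto

variable {X : Type*} [Fintype X]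

noncomputable def baMatrix (p : X → ℝ) (A : X → X → ℝ) (q : X → ℝ) : Matrix X X ℝ :=
  Matrix.of fun i j => q i * ∑ x, p x * A x i * A x j / (∑ k, q k * A x k) ^ 2

theorem sum_baMatrix_apply (p : X → ℝ) (A : X → X → ℝ) (q : X → ℝ) (j : X) :
    ∑ i, baMatrix p A q i j = ∑ x, p x * A x j / ∑ k, q k * A x k := by
  calc ∑ i, baMatrix p A q i j
      = ∑ x, (∑ i, q i * A x i) * (p x * A x j / (∑ k, q k * A x k) ^ 2) := by
        simp only [baMatrix, Matrix.of_apply, mul_sum, sum_mul]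
        rw [sum_comm]
        exact sum_congr rfl fun x _ => sum_congr rfl fun i _ => by ring
    _ = ∑ x, p x * A x j / ∑ k, q k * A x k := by
        refine sum_congr rfl fun x _ => ?_
        rcases eq_or_ne (∑ k, q k * A x k) 0 with hD | hD
        · simp [hD]
        · field_simp

theorem baMatrix_mem_colStochastic [DecidableEq X] {p : X → ℝ} {A : X → X → ℝ}
    {q : X → ℝ} (hp : ∀ x, 0 ≤ p x) (hA : ∀ x y, 0 ≤ A x y) (hq : ∀ x, 0 ≤ q x)
    (hfix : ∀ y, ∑ x, p x * A x y / ∑ k, q k * A x k = 1) :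
    baMatrix p A q ∈ Matrix.colStochastic ℝ X := by
  refine Matrix.mem_colStochastic_iff_sum.2 ⟨fun i j => ?_, fun j => ?_⟩
  · exact mul_nonneg (hq i) (sum_nonneg fun x _ =>
      div_nonneg (mul_nonneg (mul_nonneg (hp x) (hA x i)) (hA x j)) (sq_nonneg _))
  · rw [sum_baMatrix_apply, hfix]

end BlahutArimoto

theorem eigenvalues_of_M_le_one_general {X : Type*} [Fintype X]
    (p : X → ℝ) (hp : ∀ x, 0 < p x)
    (A : X → X → ℝ) (hA : ∀ x y, 0 < A x y)
    (qs : X → ℝ) (hqs : ∀ x, 0 < qs x)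
    (hfix : ∀ y, ∑ x, p x * A x y / (∑ k, qs k * A x k) = 1)
    (M : Matrix X X ℝ)
    (hM : ∀ i j, M i j =
      qs i * ∑ x, p x * A x i * A x j / (∑ k, qs k * A x k) ^ 2) :
    ∀ (μ : ℝ) (v : X → ℝ), v ≠ 0 → M.mulVec v = μ • v → μ ≤ 1 := by
  classical
  intro μ v hv hμ
  obtain rfl : M = baMatrix p A qs := Matrix.ext hM
  have hstoch := baMatrix_mem_colStochastic (fun x => (hp x).le) (fun x y => (hA x y).le)
    (fun x => (hqs x).le) hfix
  exact (le_abs_self μ).trans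
    (Matrix.abs_le_one_of_mulVec_eq_smul_of_mem_colStochastic hstoch hv hμ)

/-- Lemma 7: at a fixed point `q*` of the BA update (i.e. `c x̂ = 1` for all
`x̂`), every real eigenvalue `μ` of the matrix
`M i j = q* i * ∑ x, p x * A x i * A x j / (∑ k, q* k * A x k)^2`
satisfies `μ ≤ 1`. -/
theorem eigenvalues_of_M_le_one {X : Type*} [Fintype X]
    (p : X → ℝ) (hp : ∀ x, 0 < p x) (hps : ∑ x, p x = 1)
    (A : X → X → ℝ) (hA : ∀ x y, 0 < A x y)
    (qs : X → ℝ) (hqs : ∀ x, 0 < qs x) (hqss : ∑ x, qs x = 1)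
    (hfix : ∀ y, ∑ x, p x * A x y / (∑ k, qs k * A x k) = 1)
    (M : Matrix X X ℝ)
    (hM : ∀ i j, M i j =
      qs i * ∑ x, p x * A x i * A x j / (∑ k, qs k * A x k) ^ 2) :
    ∀ (μ : ℝ) (v : X → ℝ), v ≠ 0 → M.mulVec v = μ • v → μ ≤ 1 :=
  eigenvalues_of_M_le_one_general p hp A hA qs hqs hfix M hM
end
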